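/- Let f : ℝ → ℝ be four times continuously differentiable on an open interval D, let x* ∈ D be a simple zero of f, and let φ : ℝ → ℝ be twice continuously differentiable with φ(0) = 0 and φ'(0) = -1/2. Define, for x near x*, y = x - f(x)/f'(x), z = x - f(x)²/((f(x)-f(y))·f'(x)), t = f(y)/f(x), and F(x) = z - [1 - (f(x)/(f(x)-f(y)))·(1 + f(y)/(f(x)-f(y)))]·(f(x)/f'(x))·φ(t). Then there exist C > 0 and a neighborhood U of x* such that |F(x) - x*| ≤ C·|x - x*|⁴ for all x ∈ U where F is defined. -/

import Mathlib

/-!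
Write `e = x - x₀`, `a = f x`, `d = f' x`, `y = x - a / d`, `b = f y`, `g = a - b` and
`ψ = φ (b / a) + (b / a) / 2`. Clearing denominators,
`F - x₀ = N / (g² d)` with `N = g² d (y - x₀) - a² b + b³ / 2 - b (b - 2a) a ψ`.
Taylor expansion at the simple zero gives `a = c₁ e + c₂ e² + O(e³)`, `d = c₁ + 2 c₂ e + O(e²)`,
hence `y - x₀ = (c₂ / c₁) e² + O(e³)`, `b = c₁ (y - x₀) + O(e⁴) = c₂ e² + O(e³)`, and
`ψ = O(e²)` because `φ(t) = -t/2 + O(t²)`. Since the order-three terms of `g² d - c₁ a²` cancel,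
`N = (y - x₀) (g² d - c₁ a²) - a² (b - c₁ (y - x₀)) + O(e⁶) = O(e⁶)`, while `g² d ≍ c₁³ e²`.
-/

open Filter Asymptotics Topology

theorem isBigO_sub_pow_succ_of_hasDerivAt {E : Type*} [NormedAddCommGroup E] [NormedSpace ℝ E]
    {h h' : ℝ → E} {a : ℝ} {n : ℕ}
    (hh : ∀ᶠ x in 𝓝 a, HasDerivAt h (h' x) x) (hh' : h' =O[𝓝 a] fun x => (x - a) ^ n) :
    (fun x => h x - h a) =O[𝓝 a] fun x => (x - a) ^ (n + 1) := by
  obtain ⟨c, hc, hch'⟩ := hh'.exists_pos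
  obtain ⟨r, hr, hball⟩ := Metric.eventually_nhds_iff_ball.1 (hh.and hch'.bound)
  refine .of_bound c (Metric.eventually_nhds_iff_ball.2 ⟨r, hr, fun x hx => ?_⟩)
  have hseg : segment ℝ a x ⊆ Metric.ball a r :=
    (convex_ball a r).segment_subset (Metric.mem_ball_self hr) hx
  have hbound : ∀ y ∈ segment ℝ a x, ‖h' y‖ ≤ c * ‖x - a‖ ^ n := fun y hy => by
    refine (hball y (hseg hy)).2.trans ?_
    rw [norm_pow]
    exact mul_le_mul_of_nonneg_left
      (pow_le_pow_left₀ (norm_nonneg _) (norm_sub_le_of_mem_segment hy) n) hc.le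
  have := (convex_segment a x).norm_image_sub_le_of_norm_hasDerivWithin_le
    (fun y hy => (hball y (hseg hy)).1.hasDerivWithinAt) hbound
    (left_mem_segment ℝ a x) (right_mem_segment ℝ a x)
  rwa [norm_pow, pow_succ, ← mul_assoc]

theorem ContDiffAt.isBigO_sub_taylor_one {g : ℝ → ℝ} {a : ℝ} (hg : ContDiffAt ℝ 2 g a) :
    (fun x => g x - g a - deriv g a * (x - a)) =O[𝓝 a] fun x => (x - a) ^ 2 := by
  have hderiv : ∀ᶠ x in 𝓝 a,
      HasDerivAt (fun x => g x - deriv g a * (x - a)) (deriv g x - deriv g a) x := by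
    filter_upwards [hg.eventually (by simp)] with x hx
    simpa using (hx.differentiableAt (by simp)).hasDerivAt.fun_sub
      (((hasDerivAt_id x).sub_const a).const_mul (deriv g a))
  have hg' : DifferentiableAt ℝ (deriv g) a :=
    (hg.derivWithin (m := 1) (by norm_num)).differentiableAt one_ne_zero
  refine (isBigO_sub_pow_succ_of_hasDerivAt (n := 1) hderiv ?_).congr_left fun x => by ring
  simpa using hg'.hasDerivAt.isBigO_sub

theorem ContDiffAt.isBigO_sub_taylor_two {g : ℝ → ℝ} {a : ℝ} (hg : ContDiffAt ℝ 3 g a) :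
    (fun x => g x - g a - deriv g a * (x - a) - deriv (deriv g) a / 2 * (x - a) ^ 2)
      =O[𝓝 a] fun x => (x - a) ^ 3 := by
  have hderiv : ∀ᶠ x in 𝓝 a,
      HasDerivAt (fun x => g x - deriv g a * (x - a) - deriv (deriv g) a / 2 * (x - a) ^ 2)
        (deriv g x - deriv g a - deriv (deriv g) a * (x - a)) x := by
    filter_upwards [hg.eventually (by simp)] with x hx
    refine (((hx.differentiableAt (by simp)).hasDerivAt.fun_sub
      (((hasDerivAt_id' x).sub_const a).const_mul (deriv g a))).fun_sub
      ((((hasDerivAt_id' x).sub_const a).fun_pow 2).const_mul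
        (deriv (deriv g) a / 2))).congr_deriv ?_
    norm_num
    ring
  refine (isBigO_sub_pow_succ_of_hasDerivAt hderiv ?_).congr_left fun x => by ring
  simpa using (hg.derivWithin (m := 2) (by norm_num)).isBigO_sub_taylor_one

section Expansion

variable {α : Type*} {l : Filter α} {e : α → ℝ}

theorem isBigO_pow_of_le (he : Tendsto e l (𝓝 0)) {i j : ℕ} (hij : i ≤ j) :
    (fun x => e x ^ j) =O[l] fun x => e x ^ i :=
  ((isBigO_refl (fun x => e x ^ i) l).mul ((he.isBigO_one ℝ).pow (j - i))).congr
    (fun x => by rw [← pow_add, Nat.add_sub_cancel' hij]) fun x => by simp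

theorem Asymptotics.IsBigO.of_sub_const_mul_pow {u : α → ℝ} {c : ℝ} {k : ℕ}
    (he : Tendsto e l (𝓝 0)) (h : (fun x => u x - c * e x ^ k) =O[l] fun x => e x ^ (k + 1)) :
    u =O[l] fun x => e x ^ k :=
  ((h.trans (isBigO_pow_of_le he k.le_succ)).add
    ((isBigO_refl _ l).const_mul_left c)).congr_left fun x => by ring

theorem Asymptotics.IsBigO.mul_pow {u v : α → ℝ} {i j : ℕ} (hu : u =O[l] fun x => e x ^ i)
    (hv : v =O[l] fun x => e x ^ j) : (fun x => u x * v x) =O[l] fun x => e x ^ (i + j) :=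
  (hu.mul hv).congr_right fun _ => (pow_add _ _ _).symm

theorem isBigO_of_sub_const_mul {a : α → ℝ} {c : ℝ} (hc : c ≠ 0) (he : Tendsto e l (𝓝 0))
    (h : (fun x => a x - c * e x) =O[l] fun x => e x ^ 2) : e =O[l] a := by
  have hsq : (fun x => e x ^ 2) =o[l] fun x => c * e x :=
    (((isLittleO_one_iff ℝ).2 he).mul_isBigO (isBigO_self_const_mul hc e l)).congr
      (fun x => by ring) fun x => by ring
  exact (isBigO_self_const_mul hc e l).trans
    ((h.trans_isLittleO hsq).right_isBigO_add.congr_right fun x => by ring)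

theorem Asymptotics.IsBigO.div_pow {u v w g : α → ℝ} {n : ℕ}
    (hu : u =O[l] fun x => v x * w x ^ n) (hw : w =O[l] g) :
    (fun x => u x / g x ^ n) =O[l] v := by
  obtain ⟨C, hC, hCu⟩ := hu.exists_nonneg
  obtain ⟨K, hK, hKw⟩ := hw.exists_nonneg
  refine .of_bound (C * K ^ n) ?_
  filter_upwards [hCu.bound, hKw.bound] with x hux hwx
  rcases eq_or_ne (g x ^ n) 0 with hg | hg
  · simp only [hg, div_zero, norm_zero]
    positivity
  · rw [norm_div, div_le_iff₀ (norm_pos_iff.2 hg)]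
    calc ‖u x‖ ≤ C * (‖v x‖ * ‖w x‖ ^ n) := by simpa [norm_mul, norm_pow] using hux
      _ ≤ C * (‖v x‖ * (K * ‖g x‖) ^ n) := by gcongr
      _ = C * K ^ n * ‖v x‖ * ‖g x ^ n‖ := by rw [norm_pow]; ring

variable {a b d : α → ℝ} {c₁ c₂ : ℝ}

theorem isBigO_newton_error (he : Tendsto e l (𝓝 0)) (hd : Tendsto d l (𝓝 c₁)) (hc : c₁ ≠ 0)
    (ha : (fun x => a x - c₁ * e x - c₂ * e x ^ 2) =O[l] fun x => e x ^ 3)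
    (hd' : (fun x => d x - c₁ - 2 * c₂ * e x) =O[l] fun x => e x ^ 2) :
    (fun x => c₁ * (e x - a x / d x) - c₂ * e x ^ 2) =O[l] fun x => e x ^ 3 := by
  have hd₁ : (fun x => d x - c₁) =O[l] fun x => e x ^ 1 :=
    .of_sub_const_mul_pow (c := 2 * c₂) he (by simpa using hd')
  have hnum := ((((isBigO_refl (fun x => e x ^ 1) l).const_mul_left c₁).mul_pow hd').sub
    (ha.const_mul_left c₁)).sub
      (((isBigO_refl (fun x => e x ^ 2) l).const_mul_left c₂).mul_pow hd₁ :)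
  refine (hnum.mul ((hd.inv₀ hc).isBigO_one ℝ)).congr' ?_ (.of_forall fun x => mul_one _)
  filter_upwards [hd.eventually_ne hc] with x hdx
  field_simp
  ring

/-- The order-two terms `2 c₁ c₂ e²` of `a (d - c₁)` and `2 b d` cancel in
`(a - b)² d - c₁ a² = a (a (d - c₁) - 2 b d) + b² d`. -/
theorem isBigO_sub_sq_mul_sub_const_mul_sq (he : Tendsto e l (𝓝 0)) (hd : Tendsto d l (𝓝 c₁))
    (ha : (fun x => a x - c₁ * e x - c₂ * e x ^ 2) =O[l] fun x => e x ^ 3)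
    (hd' : (fun x => d x - c₁ - 2 * c₂ * e x) =O[l] fun x => e x ^ 2)
    (hb : (fun x => b x - c₂ * e x ^ 2) =O[l] fun x => e x ^ 3) :
    (fun x => (a x - b x) ^ 2 * d x - c₁ * a x ^ 2) =O[l] fun x => e x ^ 4 := by
  have ha₂ : (fun x => a x - c₁ * e x ^ 1) =O[l] fun x => e x ^ 2 :=
    .of_sub_const_mul_pow he (by simpa using ha)
  have ha₁ : a =O[l] fun x => e x ^ 1 := .of_sub_const_mul_pow he ha₂
  have hd₁ : (fun x => d x - c₁) =O[l] fun x => e x ^ 1 :=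
    .of_sub_const_mul_pow (c := 2 * c₂) he (by simpa using hd')
  have hb₂ : b =O[l] fun x => e x ^ 2 := .of_sub_const_mul_pow he hb
  have hd₀ : d =O[l] fun x => e x ^ 0 := by simpa using hd.isBigO_one ℝ
  have hbracket := ((ha₂.mul_pow hd₁).add
    (((isBigO_refl (fun x => e x ^ 1) l).const_mul_left c₁).mul_pow hd' :)).sub
    ((hb.mul_pow hd₀ :).const_mul_left 2) |>.sub
    (((isBigO_refl (fun x => e x ^ 2) l).const_mul_left (2 * c₂)).mul_pow hd₁ :)
  exact ((ha₁.mul_pow hbracket).add ((hb₂.mul_pow hb₂).mul_pow hd₀ :)).congr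
    (fun x => by ring) fun _ => rfl

theorem isBigO_two_point_numerator {η ψ : α → ℝ} (he : Tendsto e l (𝓝 0))
    (ha : a =O[l] fun x => e x ^ 1) (hb : b =O[l] fun x => e x ^ 2)
    (hη : η =O[l] fun x => e x ^ 2) (hbη : (fun x => b x - c₁ * η x) =O[l] fun x => e x ^ 4)
    (hg : (fun x => (a x - b x) ^ 2 * d x - c₁ * a x ^ 2) =O[l] fun x => e x ^ 4)
    (hψ : ψ =O[l] fun x => e x ^ 2) :
    (fun x => (a x - b x) ^ 2 * d x * η x - a x ^ 2 * b x + b x ^ 3 / 2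
      - b x * (b x - 2 * a x) * a x * ψ x) =O[l] fun x => e x ^ 6 := by
  have hb2a : (fun x => b x - 2 * a x) =O[l] fun x => e x ^ 1 :=
    (hb.trans (isBigO_pow_of_le he (by norm_num))).sub (ha.const_mul_left 2)
  exact ((((hη.mul_pow hg).sub ((ha.mul_pow ha).mul_pow hbη :)).add
    (((hb.mul_pow hb).mul_pow hb :).const_mul_left (1 / 2))).sub
    (((hb.mul_pow hb2a).mul_pow ha).mul_pow hψ :)).congr (fun x => by ring) fun _ => rfl

theorem isBigO_comp_add_half {t : α → ℝ} {φ : ℝ → ℝ} (hφ : ContDiffAt ℝ 2 φ 0) (hφ0 : φ 0 = 0)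
    (hφ'0 : deriv φ 0 = -1 / 2) (he : Tendsto e l (𝓝 0)) (ht : t =O[l] fun x => e x ^ 1) :
    (fun x => φ (t x) + t x / 2) =O[l] fun x => e x ^ 2 :=
  ((hφ.isBigO_sub_taylor_one.comp_tendsto (ht.trans_tendsto (by simpa using he))).trans
    ((ht.pow 2).congr_left fun x => by simp)).congr
    (fun x => by simp [hφ0, hφ'0]; ring) fun x => by ring

end Expansion

theorem two_point_sub_eq {x x₀ a b d p : ℝ} (hd : d ≠ 0) (ha : a ≠ 0) (hab : a ≠ b) :
    x - a ^ 2 / ((a - b) * d) - (1 - a / (a - b) * (1 + b / (a - b))) * (a / d) * p - x₀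
      = ((a - b) ^ 2 * d * (x - a / d - x₀) - a ^ 2 * b + b ^ 3 / 2
          - b * (b - 2 * a) * a * (p + b / a / 2)) / ((a - b) ^ 2 * d) := by
  have hab' : a - b ≠ 0 := sub_ne_zero.2 hab
  field_simp
  ring

noncomputable def newtonStep (f : ℝ → ℝ) (x : ℝ) : ℝ := x - f x / deriv f x

section NewtonStep

variable {f : ℝ → ℝ} {x₀ : ℝ}

theorem isBigO_newtonStep_error (hf : ContDiffAt ℝ 3 f x₀) (hroot : f x₀ = 0)
    (hder : deriv f x₀ ≠ 0) :
    (fun x => deriv f x₀ * (newtonStep f x - x₀) - deriv (deriv f) x₀ / 2 * (x - x₀) ^ 2)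
      =O[𝓝 x₀] fun x => (x - x₀) ^ 3 := by
  have he : Tendsto (fun x => x - x₀) (𝓝 x₀) (𝓝 0) := tendsto_sub_nhds_zero_iff.2 tendsto_id
  have hd : Tendsto (deriv f) (𝓝 x₀) (𝓝 (deriv f x₀)) :=
    (hf.derivWithin (m := 2) (by norm_num)).continuousAt.tendsto
  refine (isBigO_newton_error he hd hder
    (by simpa [hroot] using hf.isBigO_sub_taylor_two) ?_).congr_left fun x => by
      simp only [newtonStep]; ring
  exact (hf.derivWithin (m := 2) (by norm_num)).isBigO_sub_taylor_one.congr_left fun x => by ring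

theorem isBigO_newtonStep_sub (hf : ContDiffAt ℝ 3 f x₀) (hroot : f x₀ = 0)
    (hder : deriv f x₀ ≠ 0) :
    (fun x => newtonStep f x - x₀) =O[𝓝 x₀] fun x => (x - x₀) ^ 2 :=
  (isBigO_const_mul_left_iff hder).1 <| .of_sub_const_mul_pow
    (tendsto_sub_nhds_zero_iff.2 tendsto_id) (isBigO_newtonStep_error hf hroot hder)

theorem tendsto_newtonStep (hf : ContDiffAt ℝ 3 f x₀) (hroot : f x₀ = 0)
    (hder : deriv f x₀ ≠ 0) : Tendsto (newtonStep f) (𝓝 x₀) (𝓝 x₀) := by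
  refine tendsto_sub_nhds_zero_iff.1 ((isBigO_newtonStep_sub hf hroot hder).trans_tendsto ?_)
  simpa using ((continuous_sub_right x₀).fun_pow 2).tendsto x₀

theorem isBigO_f_newtonStep_sub (hf : ContDiffAt ℝ 3 f x₀) (hroot : f x₀ = 0)
    (hder : deriv f x₀ ≠ 0) :
    (fun x => f (newtonStep f x) - deriv f x₀ * (newtonStep f x - x₀))
      =O[𝓝 x₀] fun x => (x - x₀) ^ 4 := by
  have := (hf.of_le (by norm_num)).isBigO_sub_taylor_one.comp_tendsto
    (tendsto_newtonStep hf hroot hder)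
  exact (this.trans ((isBigO_newtonStep_sub hf hroot hder).pow 2)).congr
    (fun x => by simp [hroot]) fun x => by ring

theorem isBigO_f_newtonStep (hf : ContDiffAt ℝ 3 f x₀) (hroot : f x₀ = 0)
    (hder : deriv f x₀ ≠ 0) :
    (fun x => f (newtonStep f x) - deriv (deriv f) x₀ / 2 * (x - x₀) ^ 2)
      =O[𝓝 x₀] fun x => (x - x₀) ^ 3 :=
  (((isBigO_f_newtonStep_sub hf hroot hder).trans
    (isBigO_pow_of_le (tendsto_sub_nhds_zero_iff.2 tendsto_id) (by norm_num))).add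
    (isBigO_newtonStep_error hf hroot hder)).congr_left fun x => by ring

theorem isBigO_two_point_error {φ : ℝ → ℝ} (hf : ContDiffAt ℝ 3 f x₀) (hroot : f x₀ = 0)
    (hder : deriv f x₀ ≠ 0) (hφ : ContDiffAt ℝ 2 φ 0) (hφ0 : φ 0 = 0)
    (hφ'0 : deriv φ 0 = -1 / 2) :
    (fun x =>
      let a := f x
      let b := f (newtonStep f x)
      ((a - b) ^ 2 * deriv f x * (newtonStep f x - x₀) - a ^ 2 * b + b ^ 3 / 2
        - b * (b - 2 * a) * a * (φ (b / a) + b / a / 2)) / ((a - b) ^ 2 * deriv f x))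
      =O[𝓝 x₀] fun x => (x - x₀) ^ 4 := by
  have he : Tendsto (fun x => x - x₀) (𝓝 x₀) (𝓝 0) := tendsto_sub_nhds_zero_iff.2 tendsto_id
  have hd : Tendsto (deriv f) (𝓝 x₀) (𝓝 (deriv f x₀)) :=
    (hf.derivWithin (m := 2) (by norm_num)).continuousAt.tendsto
  have hfT : (fun x => f x - deriv f x₀ * (x - x₀) - deriv (deriv f) x₀ / 2 * (x - x₀) ^ 2)
      =O[𝓝 x₀] fun x => (x - x₀) ^ 3 := by
    simpa [hroot] using hf.isBigO_sub_taylor_two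
  have hdT : (fun x => deriv f x - deriv f x₀ - 2 * (deriv (deriv f) x₀ / 2) * (x - x₀))
      =O[𝓝 x₀] fun x => (x - x₀) ^ 2 :=
    (hf.derivWithin (m := 2) (by norm_num)).isBigO_sub_taylor_one.congr_left fun x => by ring
  have hb := isBigO_f_newtonStep hf hroot hder
  have hf₂ : (fun x => f x - deriv f x₀ * (x - x₀) ^ 1) =O[𝓝 x₀] fun x => (x - x₀) ^ 2 :=
    .of_sub_const_mul_pow he (by simpa using hfT)
  have hf₁ : f =O[𝓝 x₀] fun x => (x - x₀) ^ 1 := .of_sub_const_mul_pow he hf₂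
  have hb₂ : (fun x => f (newtonStep f x)) =O[𝓝 x₀] fun x => (x - x₀) ^ 2 :=
    .of_sub_const_mul_pow he hb
  have hef : (fun x => x - x₀) =O[𝓝 x₀] f := isBigO_of_sub_const_mul hder he (by simpa using hf₂)
  have heg : (fun x => x - x₀) =O[𝓝 x₀] fun x => f x - f (newtonStep f x) :=
    isBigO_of_sub_const_mul hder he ((hf₂.sub hb₂).congr_left fun x => by ring)
  have ht : (fun x => f (newtonStep f x) / f x) =O[𝓝 x₀] fun x => (x - x₀) ^ 1 :=
    (hb₂.congr_right fun x => by ring).div_pow (n := 1) hef |>.congr_left fun x => by simp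
  have hN := isBigO_two_point_numerator he hf₁ hb₂ (isBigO_newtonStep_sub hf hroot hder)
    (isBigO_f_newtonStep_sub hf hroot hder) (isBigO_sub_sq_mul_sub_const_mul_sq he hd hfT hdT hb)
    (isBigO_comp_add_half hφ hφ0 hφ'0 he ht)
  exact (((hN.congr_right fun x => by ring).div_pow (n := 2) heg).mul
    ((hd.inv₀ hder).isBigO_one ℝ)).congr (fun x => by rw [← div_eq_mul_inv, div_div])
    fun x => mul_one _

end NewtonStep

theorem stmt14_general (D : Set ℝ) (hD : IsOpen D)
    (f : ℝ → ℝ) (hf : ContDiffOn ℝ 4 f D)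
    (x₀ : ℝ) (hx₀ : x₀ ∈ D) (hroot : f x₀ = 0) (hder : deriv f x₀ ≠ 0)
    (φ : ℝ → ℝ) (hφ : ContDiff ℝ 2 φ) (hφ0 : φ 0 = 0) (hφ'0 : deriv φ 0 = -1/2) :
    ∃ C > 0, ∃ U ∈ nhds x₀, ∀ x ∈ U,
      deriv f x ≠ 0 → f x ≠ 0 → f x ≠ f (x - f x / deriv f x) →
      (let y := x - f x / deriv f x
       let z := x - (f x)^2 / ((f x - f y) * deriv f x)
       let t := f y / f x
       let F := z - (1 - (f x / (f x - f y)) * (1 + f y / (f x - f y))) *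
                  (f x / deriv f x) * φ t
       |F - x₀| ≤ C * |x - x₀|^4) := by
  have hf₃ : ContDiffAt ℝ 3 f x₀ := (hf.contDiffAt (hD.mem_nhds hx₀)).of_le (by norm_num)
  obtain ⟨C, hC, hbound⟩ :=
    (isBigO_two_point_error hf₃ hroot hder hφ.contDiffAt hφ0 hφ'0).exists_pos
  obtain ⟨U, hU, hUbound⟩ := hbound.bound.exists_mem
  refine ⟨C, hC, U, hU, fun x hx hd ha hab => ?_⟩
  have hx := hUbound x hx
  rw [Real.norm_eq_abs, Real.norm_eq_abs, abs_pow] at hx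
  dsimp only
  rwa [two_point_sub_eq hd ha hab]

theorem stmt14 (D : Set ℝ) (hD : IsOpen D) (hDconn : D.OrdConnected)
    (f : ℝ → ℝ) (hf : ContDiffOn ℝ 4 f D)
    (x₀ : ℝ) (hx₀ : x₀ ∈ D) (hroot : f x₀ = 0) (hder : deriv f x₀ ≠ 0)
    (φ : ℝ → ℝ) (hφ : ContDiff ℝ 2 φ) (hφ0 : φ 0 = 0) (hφ'0 : deriv φ 0 = -1/2) :
    ∃ C > 0, ∃ U ∈ nhds x₀, ∀ x ∈ U,
      deriv f x ≠ 0 → f x ≠ 0 → f x ≠ f (x - f x / deriv f x) →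
      (let y := x - f x / deriv f x
       let z := x - (f x)^2 / ((f x - f y) * deriv f x)
       let t := f y / f x
       let F := z - (1 - (f x / (f x - f y)) * (1 + f y / (f x - f y))) *
                  (f x / deriv f x) * φ t
       |F - x₀| ≤ C * |x - x₀|^4) :=
  stmt14_general D hD f hf x₀ hx₀ hroot hder φ hφ hφ0 hφ'0
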